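/- Let M be an almost contact metric manifold which is a CR-manifold and satisfies hφ + φh = 0 (equivalently, the Reeb vector field is autoparallel with respect to the Levi-Civita connection). Then there exists a linear connection ∇̃ on M making the whole almost contact metric structure parallel: ∇̃φ = 0, ∇̃ξ = 0, ∇̃η = 0 and ∇̃g = 0. -/
import Mathlib


noncomputable section

/-!
An abstract model of smooth geometry: `F` plays the role of the algebra of
smooth real-valued functions on a manifold `M`, `V` plays the role of the
`C^∞(M)`-module of smooth vector fields on `M` (with its Lie bracket), and
`D X f` represents the directional derivative of the function `f` along the
vector field `X`.
-/
structure SmoothSetting (F V : Type*) [CommRing F] [Algebra ℝ F]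
    [LieRing V] [Module F V] [Module ℝ V] [IsScalarTower ℝ F V] where
  D : V → F → F
  D_add : ∀ (X : V) (f g : F), D X (f + g) = D X f + D X g
  D_mul : ∀ (X : V) (f g : F), D X (f * g) = f * D X g + g * D X f
  D_addX : ∀ (X Y : V) (f : F), D (X + Y) f = D X f + D Y f
  D_smulX : ∀ (f : F) (X : V) (k : F), D (f • X) k = f * D X k
  D_bracket : ∀ (X Y : V) (f : F), D ⁅X, Y⁆ f = D X (D Y f) - D Y (D X f)
  bracket_smul : ∀ (f : F) (X Y : V), ⁅X, f • Y⁆ = f • ⁅X, Y⁆ + D X f • Y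

/-- An almost contact metric manifold, modelled abstractly: a quadruple
`(φ, ξ, η, g)` where `φ` is a `(1,1)`-tensor field, `ξ` a vector field, `η` a
one-form and `g` a Riemannian metric, satisfying `φ² = -Id + η ⊗ ξ`,
`η(ξ) = 1` and `g(φX, φY) = g(X,Y) - η(X)η(Y)`, together with the Levi-Civita
connection `nabla` of `g` (characterised by metricity and torsion-freeness). -/
structure ACMS (F V : Type*) [CommRing F] [PartialOrder F] [Algebra ℝ F]
    [LieRing V] [Module F V] [Module ℝ V] [IsScalarTower ℝ F V]
    extends SmoothSetting F V where
  phi : V → V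
  xi : V
  eta : V → F
  g : V → V → F
  phi_add : ∀ X Y : V, phi (X + Y) = phi X + phi Y
  phi_smul : ∀ (f : F) (X : V), phi (f • X) = f • phi X
  eta_add : ∀ X Y : V, eta (X + Y) = eta X + eta Y
  eta_smul : ∀ (f : F) (X : V), eta (f • X) = f * eta X
  g_addX : ∀ X Y Z : V, g (X + Y) Z = g X Z + g Y Z
  g_smulX : ∀ (f : F) (X Y : V), g (f • X) Y = f * g X Y
  g_symm : ∀ X Y : V, g X Y = g Y X
  g_nondeg : ∀ X : V, (∀ Y : V, g X Y = 0) → X = 0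
  g_pos : ∀ X : V, 0 ≤ g X X
  phi_phi : ∀ X : V, phi (phi X) = -X + eta X • xi
  eta_xi : eta xi = 1
  phi_xi : phi xi = 0
  eta_phi : ∀ X : V, eta (phi X) = 0
  g_phi_phi : ∀ X Y : V, g (phi X) (phi Y) = g X Y - eta X * eta Y
  nabla : V → V → V
  nabla_addX : ∀ X Y Z : V, nabla (X + Y) Z = nabla X Z + nabla Y Z
  nabla_smulX : ∀ (f : F) (X Y : V), nabla (f • X) Y = f • nabla X Y
  nabla_addY : ∀ X Y Z : V, nabla X (Y + Z) = nabla X Y + nabla X Z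
  nabla_leibniz : ∀ (X : V) (f : F) (Y : V),
    nabla X (f • Y) = D X f • Y + f • nabla X Y
  nabla_torsion_free : ∀ X Y : V, nabla X Y - nabla Y X = ⁅X, Y⁆
  nabla_metric : ∀ X Y Z : V,
    D X (g Y Z) = g (nabla X Y) Z + g Y (nabla X Z)

namespace ACMS

variable {F V : Type*} [CommRing F] [PartialOrder F] [Algebra ℝ F]
  [LieRing V] [Module F V] [Module ℝ V] [IsScalarTower ℝ F V]
variable (A : ACMS F V)

/-- The fundamental form `Φ(X,Y) = g(X, φY)`. -/
def Phi (X Y : V) : F := A.g X (A.phi Y)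

/-- The exterior derivative `dη`, via the coboundary formula
`2 dη(X,Y) = X η(Y) - Y η(X) - η([X,Y])`. -/
def dEta (X Y : V) : F :=
  ((1:ℝ)/2) • (A.D X (A.eta Y) - A.D Y (A.eta X) - A.eta ⁅X, Y⁆)

/-- The exterior derivative `dΦ`, via the coboundary formula. -/
def dPhi (X Y Z : V) : F :=
  ((1:ℝ)/3) • (A.D X (A.Phi Y Z) + A.D Y (A.Phi Z X) + A.D Z (A.Phi X Y)
    - A.Phi ⁅X, Y⁆ Z - A.Phi ⁅Y, Z⁆ X - A.Phi ⁅Z, X⁆ Y)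

/-- The Lie derivative `(L_ξ η)(X)`. -/
def lieEta (X : V) : F := A.D A.xi (A.eta X) - A.eta ⁅A.xi, X⁆

/-- The Lie derivative `(L_ξ g)(X,Y)`. -/
def lieG (X Y : V) : F :=
  A.D A.xi (A.g X Y) - A.g ⁅A.xi, X⁆ Y - A.g X ⁅A.xi, Y⁆

/-- The Lie derivative `(L_ξ Φ)(X,Y)`. -/
def liePhiForm (X Y : V) : F :=
  A.D A.xi (A.Phi X Y) - A.Phi ⁅A.xi, X⁆ Y - A.Phi X ⁅A.xi, Y⁆

/-- The Lie derivative `(L_ξ φ)(X)`. -/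
def liePhi (X : V) : V := ⁅A.xi, A.phi X⁆ - A.phi ⁅A.xi, X⁆

/-- The tensor field `h = (1/2) L_ξ φ`. -/
def h (X : V) : V := ((1:ℝ)/2) • A.liePhi X

/-- The Nijenhuis torsion `[φ,φ](X,Y)`. -/
def nijPhi (X Y : V) : V :=
  A.phi (A.phi ⁅X, Y⁆) + ⁅A.phi X, A.phi Y⁆
    - A.phi ⁅A.phi X, Y⁆ - A.phi ⁅X, A.phi Y⁆

/-- The tensor `N⁽¹⁾(X,Y) = [φ,φ](X,Y) + 2 dη(X,Y) ξ`. -/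
def N1 (X Y : V) : V := A.nijPhi X Y + (2 * A.dEta X Y) • A.xi

/-- The tensor `N⁽²⁾(X,Y) = (L_{φX} η)(Y) - (L_{φY} η)(X)`. -/
def N2 (X Y : V) : F :=
  (A.D (A.phi X) (A.eta Y) - A.eta ⁅A.phi X, Y⁆)
    - (A.D (A.phi Y) (A.eta X) - A.eta ⁅A.phi Y, X⁆)

/-- The covariant derivative `(∇_X φ)(Y)`. -/
def covPhi (X Y : V) : V := A.nabla X (A.phi Y) - A.phi (A.nabla X Y)

/-- The covariant derivative `(∇_X η)(Y)`. -/
def covEta (X Y : V) : F := A.D X (A.eta Y) - A.eta (A.nabla X Y)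

/-- `M` is `η`-normal: `N⁽¹⁾(X,Y) = 0` whenever `η(X) = η(Y) = 0`. -/
def EtaNormal : Prop := ∀ X Y : V, A.eta X = 0 → A.eta Y = 0 → A.N1 X Y = 0

/-- `M` is normal: `N⁽¹⁾ = 0` identically. -/
def Normal : Prop := ∀ X Y : V, A.N1 X Y = 0

/-- `M` is a CR-manifold: for all `X, Y` with `η(X) = η(Y) = 0` there is `Z`
with `η(Z) = 0` and `[X - iφX, Y - iφY] = Z - iφZ` (stated here via its real
and imaginary parts). -/
def IsCR : Prop := ∀ X Y : V, A.eta X = 0 → A.eta Y = 0 →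
  ∃ Z : V, A.eta Z = 0 ∧ ⁅X, Y⁆ - ⁅A.phi X, A.phi Y⁆ = Z ∧
    ⁅A.phi X, Y⁆ + ⁅X, A.phi Y⁆ = A.phi Z

/-- `Dc` is a linear connection on `M`. -/
def IsConnection (Dc : V → V → V) : Prop :=
  (∀ X Y Z : V, Dc (X + Y) Z = Dc X Z + Dc Y Z) ∧
  (∀ (f : F) (X Y : V), Dc (f • X) Y = f • Dc X Y) ∧
  (∀ X Y Z : V, Dc X (Y + Z) = Dc X Y + Dc X Z) ∧
  (∀ (X : V) (f : F) (Y : V), Dc X (f • Y) = A.D X f • Y + f • Dc X Y)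

/-- `Dc` is a parallelization: a linear connection making the whole almost
contact metric structure parallel, `∇̃φ = 0`, `∇̃ξ = 0`, `∇̃η = 0`, `∇̃g = 0`. -/
def IsParallelization (Dc : V → V → V) : Prop :=
  A.IsConnection Dc ∧
  (∀ X Y : V, Dc X (A.phi Y) = A.phi (Dc X Y)) ∧
  (∀ X : V, Dc X A.xi = 0) ∧
  (∀ X Y : V, A.D X (A.eta Y) = A.eta (Dc X Y)) ∧
  (∀ X Y Z : V, A.D X (A.g Y Z) = A.g (Dc X Y) Z + A.g Y (Dc X Z))

end ACMS
namespace ACMS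

section AuxPar

variable {F V : Type*} [CommRing F] [PartialOrder F] [Algebra ℝ F]
  [LieRing V] [Module F V] [Module ℝ V] [IsScalarTower ℝ F V]
  (A : ACMS F V)

lemma aux_D_zero (X : V) : A.D X (0:F) = 0 := by
  have h : A.D X (0:F) = A.D X 0 + A.D X 0 := by simpa using A.D_add X 0 0
  exact left_eq_add.mp h

lemma aux_D_one (X : V) : A.D X (1:F) = 0 := by
  have h : A.D X (1:F) = A.D X 1 + A.D X 1 := by simpa using A.D_mul X 1 1
  exact left_eq_add.mp h

lemma aux_D_neg (X : V) (f : F) : A.D X (-f) = - A.D X f := by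
  have h := A.D_add X f (-f)
  rw [add_neg_cancel, aux_D_zero] at h
  linear_combination -h

lemma aux_D_sub (X : V) (f g : F) : A.D X (f - g) = A.D X f - A.D X g := by
  rw [sub_eq_add_neg, A.D_add, aux_D_neg, sub_eq_add_neg]

lemma aux_g_addY (X Y Z : V) : A.g X (Y + Z) = A.g X Y + A.g X Z := by
  rw [A.g_symm X (Y + Z), A.g_addX, A.g_symm Y X, A.g_symm Z X]

lemma aux_g_smulY (f : F) (X Y : V) : A.g X (f • Y) = f * A.g X Y := by
  rw [A.g_symm X (f • Y), A.g_smulX, A.g_symm Y X]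

lemma aux_g_zeroY (X : V) : A.g X (0:V) = 0 := by
  have := aux_g_smulY A (0:F) X (0:V)
  simpa using this

lemma aux_g_negY (X Y : V) : A.g X (-Y) = - A.g X Y := by
  rw [show -Y = (-1 : F) • Y by rw [neg_one_smul], aux_g_smulY, neg_one_mul]

lemma aux_g_subY (X Y Z : V) : A.g X (Y - Z) = A.g X Y - A.g X Z := by
  rw [sub_eq_add_neg, aux_g_addY, aux_g_negY, sub_eq_add_neg]

lemma aux_g_negX (X Y : V) : A.g (-X) Y = - A.g X Y := by
  rw [A.g_symm, aux_g_negY, A.g_symm Y X]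

lemma aux_g_subX (X Y Z : V) : A.g (X - Y) Z = A.g X Z - A.g Y Z := by
  rw [A.g_symm, aux_g_subY, A.g_symm Z X, A.g_symm Z Y]

lemma aux_eta_zero : A.eta (0:V) = 0 := by
  have := A.eta_smul (0:F) (0:V); simpa using this

lemma aux_eta_neg (X : V) : A.eta (-X) = - A.eta X := by
  rw [show -X = (-1 : F) • X by rw [neg_one_smul], A.eta_smul, neg_one_mul]

lemma aux_eta_sub (X Y : V) : A.eta (X - Y) = A.eta X - A.eta Y := by
  rw [sub_eq_add_neg, A.eta_add, aux_eta_neg, sub_eq_add_neg]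

lemma aux_phi_zero : A.phi (0:V) = 0 := by
  have := A.phi_smul (0:F) (0:V); simpa using this

lemma aux_phi_neg (X : V) : A.phi (-X) = - A.phi X := by
  rw [show -X = (-1 : F) • X by rw [neg_one_smul], A.phi_smul, neg_one_smul]

lemma aux_phi_sub (X Y : V) : A.phi (X - Y) = A.phi X - A.phi Y := by
  rw [sub_eq_add_neg, A.phi_add, aux_phi_neg, sub_eq_add_neg]

lemma aux_nabla_zeroY (X : V) : A.nabla X (0:V) = 0 := by
  have := A.nabla_leibniz X (0:F) (0:V)
  simpa [aux_D_zero] using this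

lemma aux_nabla_negY (X Y : V) : A.nabla X (-Y) = - A.nabla X Y := by
  have := A.nabla_leibniz X (-1 : F) Y
  rw [neg_one_smul] at this
  rw [this, show A.D X (-1:F) = 0 by rw [aux_D_neg, aux_D_one, neg_zero]]
  simp

lemma aux_nabla_subY (X Y Z : V) : A.nabla X (Y - Z) = A.nabla X Y - A.nabla X Z := by
  rw [sub_eq_add_neg, A.nabla_addY, aux_nabla_negY, sub_eq_add_neg]

end AuxPar

end ACMS
namespace ACMS

section AuxPar2

variable {F V : Type*} [CommRing F] [PartialOrder F] [Algebra ℝ F]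
  [LieRing V] [Module F V] [Module ℝ V] [IsScalarTower ℝ F V]
  (A : ACMS F V)

/-- `η(X) = g(X, ξ)`. -/
lemma aux_eta_g (X : V) : A.eta X = A.g X A.xi := by
  have h := A.g_phi_phi X A.xi
  rw [A.phi_xi, aux_g_zeroY, A.eta_xi, mul_one] at h
  linear_combination h

/-- `φ` is skew-symmetric for `g`. -/
lemma aux_phi_gskew (X Y : V) : A.g (A.phi X) Y = - A.g X (A.phi Y) := by
  have h1 : A.g (A.phi X) (A.phi (A.phi Y)) = A.g X (A.phi Y) := by
    rw [A.g_phi_phi, A.eta_phi, mul_zero, sub_zero]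
  rw [A.phi_phi, aux_g_addY, aux_g_negY, aux_g_smulY, ← aux_eta_g, A.eta_phi,
    mul_zero, add_zero] at h1
  linear_combination -h1

omit [PartialOrder F] in
lemma aux_half (a : F) (h : a + a = 0) : a = 0 := by
  have hc : (algebraMap ℝ F) (1/2 : ℝ) + (algebraMap ℝ F) (1/2 : ℝ) = 1 := by
    rw [← map_add]; norm_num
  calc a = ((algebraMap ℝ F) (1/2 : ℝ) + (algebraMap ℝ F) (1/2 : ℝ)) * a := by
        rw [hc, one_mul]
    _ = (algebraMap ℝ F) (1/2 : ℝ) * (a + a) := by ring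
    _ = 0 := by rw [h, mul_zero]

/-- `η(∇_X ξ) = 0`. -/
lemma aux_eta_nabla_xi (X : V) : A.eta (A.nabla X A.xi) = 0 := by
  have h := A.nabla_metric X A.xi A.xi
  have h1 : A.g A.xi A.xi = 1 := by rw [← aux_eta_g, A.eta_xi]
  rw [h1, aux_D_one, A.g_symm A.xi (A.nabla X A.xi), ← aux_eta_g] at h
  exact aux_half _ h.symm

/-- `(∇_X η)(Y) = g(Y, ∇_X ξ)`. -/
lemma aux_covEta_g (X Y : V) : A.covEta X Y = A.g Y (A.nabla X A.xi) := by
  have h := A.nabla_metric X Y A.xi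
  rw [covEta, aux_eta_g, aux_eta_g]
  linear_combination h

/-- `∇_X φ` is skew-symmetric for `g`. -/
lemma aux_covPhi_gskew (X Y Z : V) :
    A.g (A.covPhi X Y) Z = - A.g Y (A.covPhi X Z) := by
  have m1 := A.nabla_metric X (A.phi Y) Z
  have m2 := A.nabla_metric X Y (A.phi Z)
  have hD : A.D X (A.g (A.phi Y) Z) = - A.D X (A.g Y (A.phi Z)) := by
    rw [aux_phi_gskew, aux_D_neg]
  have k2 := aux_phi_gskew A Y (A.nabla X Z)
  have k3 := aux_phi_gskew A (A.nabla X Y) Z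
  rw [covPhi, covPhi, aux_g_subX, aux_g_subY]
  linear_combination -m1 - m2 + hD - k2 - k3

/-- anticommutation: `(∇_X φ)(φY) = -φ((∇_Xφ)Y) + (∇_Xη)(Y) ξ + η(Y) ∇_X ξ`. -/
lemma aux_covPhi_phi (X Y : V) :
    A.covPhi X (A.phi Y) = - A.phi (A.covPhi X Y)
      + A.covEta X Y • A.xi + A.eta Y • A.nabla X A.xi := by
  rw [covPhi, covPhi, covEta, A.phi_phi Y, A.nabla_addY, aux_nabla_negY,
    A.nabla_leibniz, aux_phi_sub, A.phi_phi (A.nabla X Y)]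
  module

end AuxPar2

end ACMS
namespace ACMS

section AuxPar3

variable {F V : Type*} [CommRing F] [PartialOrder F] [Algebra ℝ F]
  [LieRing V] [Module F V] [Module ℝ V] [IsScalarTower ℝ F V]
  (A : ACMS F V)

lemma aux_covPhi_addX (X X' Y : V) :
    A.covPhi (X + X') Y = A.covPhi X Y + A.covPhi X' Y := by
  rw [covPhi, covPhi, covPhi, A.nabla_addX, A.nabla_addX, A.phi_add]
  abel

lemma aux_covPhi_smulX (f : F) (X Y : V) :
    A.covPhi (f • X) Y = f • A.covPhi X Y := by
  rw [covPhi, covPhi, A.nabla_smulX, A.nabla_smulX, A.phi_smul, smul_sub]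

lemma aux_covPhi_addY (X Y Y' : V) :
    A.covPhi X (Y + Y') = A.covPhi X Y + A.covPhi X Y' := by
  rw [covPhi, covPhi, covPhi, A.phi_add, A.nabla_addY, A.nabla_addY, A.phi_add]
  abel

lemma aux_covPhi_smulY (f : F) (X Y : V) :
    A.covPhi X (f • Y) = f • A.covPhi X Y := by
  rw [covPhi, covPhi, A.phi_smul, A.nabla_leibniz, A.nabla_leibniz, A.phi_add,
    A.phi_smul, A.phi_smul]
  module

lemma aux_covEta_addX (X X' Y : V) :
    A.covEta (X + X') Y = A.covEta X Y + A.covEta X' Y := by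
  rw [covEta, covEta, covEta, A.D_addX, A.nabla_addX, A.eta_add]
  ring

lemma aux_covEta_smulX (f : F) (X Y : V) :
    A.covEta (f • X) Y = f * A.covEta X Y := by
  rw [covEta, covEta, A.D_smulX, A.nabla_smulX, A.eta_smul]
  ring

lemma aux_covEta_addY (X Y Y' : V) :
    A.covEta X (Y + Y') = A.covEta X Y + A.covEta X Y' := by
  rw [covEta, covEta, covEta, A.eta_add, A.D_add, A.nabla_addY, A.eta_add]
  ring

lemma aux_covEta_smulY (f : F) (X Y : V) :
    A.covEta X (f • Y) = f * A.covEta X Y := by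
  rw [covEta, covEta, A.eta_smul, A.D_mul, A.nabla_leibniz, A.eta_add,
    A.eta_smul, A.eta_smul]
  ring

/-- The adapted connection. -/
def Dcon (X Y : V) : V :=
  A.nabla X Y - (algebraMap ℝ F (1/2 : ℝ)) • A.phi (A.covPhi X Y)
    + A.covEta X Y • A.xi
    - ((algebraMap ℝ F (1/2 : ℝ)) * A.eta Y) • A.nabla X A.xi

omit [PartialOrder F] in
lemma aux_hc : (algebraMap ℝ F) (1/2 : ℝ) + (algebraMap ℝ F) (1/2 : ℝ) = 1 := by
  rw [← map_add]; norm_num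

lemma Dcon_addX (X X' Y : V) : A.Dcon (X + X') Y = A.Dcon X Y + A.Dcon X' Y := by
  rw [Dcon, Dcon, Dcon, A.nabla_addX, aux_covPhi_addX, A.phi_add,
    aux_covEta_addX, A.nabla_addX]
  module

lemma Dcon_smulX (f : F) (X Y : V) : A.Dcon (f • X) Y = f • A.Dcon X Y := by
  rw [Dcon, Dcon, A.nabla_smulX, aux_covPhi_smulX, A.phi_smul,
    aux_covEta_smulX, A.nabla_smulX]
  module

lemma Dcon_addY (X Y Y' : V) : A.Dcon X (Y + Y') = A.Dcon X Y + A.Dcon X Y' := by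
  rw [Dcon, Dcon, Dcon, A.nabla_addY, aux_covPhi_addY, A.phi_add,
    aux_covEta_addY, A.eta_add]
  module

lemma Dcon_leibniz (X : V) (f : F) (Y : V) :
    A.Dcon X (f • Y) = A.D X f • Y + f • A.Dcon X Y := by
  rw [Dcon, Dcon, A.nabla_leibniz, aux_covPhi_smulY, A.phi_smul,
    aux_covEta_smulY, A.eta_smul]
  module

end AuxPar3

end ACMS
namespace ACMS

section AuxPar4

variable {F V : Type*} [CommRing F] [PartialOrder F] [Algebra ℝ F]
  [LieRing V] [Module F V] [Module ℝ V] [IsScalarTower ℝ F V]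
  (A : ACMS F V)

lemma Dcon_xi (X : V) : A.Dcon X A.xi = 0 := by
  have h1 : A.covPhi X A.xi = - A.phi (A.nabla X A.xi) := by
    rw [covPhi, A.phi_xi, aux_nabla_zeroY, zero_sub]
  have h2 : A.phi (A.covPhi X A.xi) = A.nabla X A.xi := by
    rw [h1, aux_phi_neg, A.phi_phi, aux_eta_nabla_xi, zero_smul, add_zero,
      neg_neg]
  have h3 : A.covEta X A.xi = 0 := by
    rw [covEta, A.eta_xi, aux_D_one, zero_sub, aux_eta_nabla_xi, neg_zero]
  rw [Dcon, h2, h3, A.eta_xi, zero_smul, add_zero, mul_one]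
  rw [sub_sub, ← add_smul, aux_hc, one_smul, sub_self]

lemma Dcon_eta (X Y : V) : A.D X (A.eta Y) = A.eta (A.Dcon X Y) := by
  rw [Dcon, aux_eta_sub, A.eta_add, aux_eta_sub, A.eta_smul, A.eta_smul,
    A.eta_smul, A.eta_phi, A.eta_xi, aux_eta_nabla_xi, covEta]
  ring

lemma Dcon_phi (X Y : V) : A.Dcon X (A.phi Y) = A.phi (A.Dcon X Y) := by
  have hcp := aux_covPhi_phi A X Y
  have hE : A.covEta X (A.phi Y) = - A.eta (A.covPhi X Y) := by
    rw [covEta, A.eta_phi, aux_D_zero, zero_sub, covPhi, aux_eta_sub,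
      A.eta_phi, sub_zero]
  have hn : A.nabla X (A.phi Y) = A.covPhi X Y + A.phi (A.nabla X Y) := by
    rw [covPhi]; abel
  have hc := aux_hc (F := F)
  rw [Dcon, Dcon, hn, hcp, hE]
  simp only [A.phi_add, aux_phi_sub, aux_phi_neg, A.phi_smul, A.phi_phi,
    A.phi_xi, A.eta_phi, aux_phi_zero, mul_zero, zero_smul, sub_zero,
    smul_zero, add_zero, smul_neg, neg_neg]
  match_scalars
  all_goals first
    | ring1
    | linear_combination (norm := ring1) A.eta (A.covPhi X Y) * hc
    | linear_combination (norm := ring1) -hc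

lemma Dcon_g (X Y Z : V) :
    A.D X (A.g Y Z) = A.g (A.Dcon X Y) Z + A.g Y (A.Dcon X Z) := by
  have m := A.nabla_metric X Y Z
  have a1 := aux_phi_gskew A (A.covPhi X Y) Z
  have a2 := aux_covPhi_gskew A X Y (A.phi Z)
  have a3 := aux_covPhi_phi A X Z
  have a4 : A.g Y (A.covPhi X (A.phi Z)) =
      - A.g Y (A.phi (A.covPhi X Z)) + A.covEta X Z * A.eta Y
        + A.eta Z * A.covEta X Y := by
    rw [a3, aux_g_addY, aux_g_addY, aux_g_negY, aux_g_smulY, aux_g_smulY,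
      ← aux_eta_g, ← aux_covEta_g]
  have b1 : A.g A.xi Z = A.eta Z := by rw [A.g_symm, ← aux_eta_g]
  have b2 : A.g Y A.xi = A.eta Y := by rw [← aux_eta_g]
  have b3 : A.g (A.nabla X A.xi) Z = A.covEta X Z := by
    rw [A.g_symm, ← aux_covEta_g]
  have b4 : A.g Y (A.nabla X A.xi) = A.covEta X Y := by rw [← aux_covEta_g]
  have hc := aux_hc (F := F)
  rw [Dcon, Dcon, aux_g_subX, A.g_addX, aux_g_subX, A.g_smulX, A.g_smulX,
    A.g_smulX, aux_g_subY, aux_g_addY, aux_g_subY, aux_g_smulY, aux_g_smulY,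
    aux_g_smulY, b1, b2, b3, b4]
  linear_combination m + (algebraMap ℝ F (1/2:ℝ)) * a1
    - (algebraMap ℝ F (1/2:ℝ)) * a2 + (algebraMap ℝ F (1/2:ℝ)) * a4
    + (A.covEta X Z * A.eta Y + A.covEta X Y * A.eta Z) * hc

end AuxPar4

end ACMS

/-- Let `M` be an almost contact metric manifold which is a
CR-manifold and satisfies `hφ + φh = 0` (equivalently, the Reeb vector field
is autoparallel for the Levi-Civita connection). Then there exists a linear
connection `∇̃` on `M` making the whole almost contact metric structure
parallel: `∇̃φ = 0`, `∇̃ξ = 0`, `∇̃η = 0`, `∇̃g = 0`. -/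
theorem exists_parallelization_of_CR
    {F V : Type*} [CommRing F] [PartialOrder F] [Algebra ℝ F]
    [LieRing V] [Module F V] [Module ℝ V] [IsScalarTower ℝ F V]
    (A : ACMS F V) (hCR : A.IsCR)
    (hanti : ∀ X : V, A.h (A.phi X) + A.phi (A.h X) = 0) :
    ∃ Dc : V → V → V, A.IsParallelization Dc := by
  exact ⟨A.Dcon, ⟨A.Dcon_addX, A.Dcon_smulX, A.Dcon_addY, A.Dcon_leibniz⟩,
    A.Dcon_phi, A.Dcon_xi, A.Dcon_eta, A.Dcon_g⟩
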